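/- arXiv:1008.0751 — 8 statements merged into one kernel-verified Lean document; each statement's English description precedes it below -/
import Mathlib

section
/- Let n ≥ 1 and let L be a set of positive divisors of n containing 1 and n that is closed under gcd and lcm. Let m be a maximal element of L \ {n} with respect to divisibility, and let s be the smallest element of L not dividing m. Then L \ {d ∈ L | d ∣ m} = { x * (s / gcd(m,s)) | x ∈ L, x ∣ m, gcd(m,s) ∣ x }. -/
theorem my_gcd_lcm_distrib (a b c : ℕ) :
    Nat.gcd a (Nat.lcm b c) = Nat.lcm (Nat.gcd a b) (Nat.gcd a c) := by
  rcases eq_or_ne a 0 with rfl | ha; · simp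
  rcases eq_or_ne b 0 with rfl | hb
  · simp only [Nat.lcm_zero_left, Nat.gcd_zero_right]
    exact Nat.dvd_antisymm (Nat.dvd_lcm_left _ _)
      (Nat.lcm_dvd dvd_rfl (Nat.gcd_dvd_left _ _))
  rcases eq_or_ne c 0 with rfl | hc
  · simp only [Nat.lcm_zero_right, Nat.gcd_zero_right]
    exact Nat.dvd_antisymm (Nat.dvd_lcm_right _ _)
      (Nat.lcm_dvd (Nat.gcd_dvd_left _ _) dvd_rfl)
  have hbc : Nat.lcm b c ≠ 0 := Nat.lcm_ne_zero hb hc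
  have hab : Nat.gcd a b ≠ 0 := Nat.gcd_ne_zero_left ha
  have hac : Nat.gcd a c ≠ 0 := Nat.gcd_ne_zero_left ha
  apply Nat.dvd_antisymm
  · rw [← Nat.factorization_le_iff_dvd (Nat.gcd_ne_zero_left ha) (Nat.lcm_ne_zero hab hac),
      Nat.factorization_gcd ha hbc, Nat.factorization_lcm hab hac,
      Nat.factorization_gcd ha hb, Nat.factorization_gcd ha hc,
      Nat.factorization_lcm hb hc]
    intro p
    simp only [Finsupp.inf_apply, Finsupp.sup_apply]
    omega
  · apply Nat.lcm_dvd <;> exact Nat.dvd_gcd (Nat.gcd_dvd_left _ _)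
      ((Nat.gcd_dvd_right _ _).trans (by first | exact Nat.dvd_lcm_left _ _ | exact Nat.dvd_lcm_right _ _))

/-- Muzychuk's lemma on sublattices of the divisor lattice. -/
theorem stmt_0 (n : ℕ) (hn : 1 ≤ n) (L : Set ℕ)
    (hLpos : ∀ x ∈ L, 0 < x) (hLdvd : ∀ x ∈ L, x ∣ n)
    (h1L : 1 ∈ L) (hnL : n ∈ L)
    (hgcd : ∀ x ∈ L, ∀ y ∈ L, Nat.gcd x y ∈ L)
    (hlcm : ∀ x ∈ L, ∀ y ∈ L, Nat.lcm x y ∈ L)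
    (m : ℕ) (hmL : m ∈ L) (hmn : m ≠ n)
    (hmax : ∀ x ∈ L, x ≠ n → m ∣ x → x = m)
    (s : ℕ) (hsL : s ∈ L) (hsm : ¬ s ∣ m)
    (hmin : ∀ x ∈ L, ¬ x ∣ m → s ≤ x) :
    {l | l ∈ L ∧ ¬ l ∣ m} =
      {y | ∃ x ∈ L, x ∣ m ∧ Nat.gcd m s ∣ x ∧ y = x * (s / Nat.gcd m s)} := by
  set g := Nat.gcd m s with hg
  have hspos : 0 < s := hLpos s hsL
  have hgs : g ∣ s := Nat.gcd_dvd_right m s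
  have hgm : g ∣ m := Nat.gcd_dvd_left m s
  -- For any x ∣ m with g ∣ x, gcd x s = g and lcm x s = x * (s / g)
  have key : ∀ x : ℕ, x ∣ m → g ∣ x → Nat.lcm x s = x * (s / g) := by
    intro x hxm hgx
    have h1 : Nat.gcd x s = g := by
      apply Nat.dvd_antisymm
      · exact Nat.dvd_gcd ((Nat.gcd_dvd_left x s).trans hxm) (Nat.gcd_dvd_right x s)
      · exact Nat.dvd_gcd hgx hgs
    rw [Nat.lcm, h1, Nat.mul_div_assoc x hgs]
  -- lcm m s = n
  have hlcmms : Nat.lcm m s = n := by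
    by_contra h
    exact hsm ((Nat.dvd_lcm_right m s).trans
      (hmax _ (hlcm m hmL s hsL) h (Nat.dvd_lcm_left m s)).dvd)
  ext l
  simp only [Set.mem_setOf_eq]
  constructor
  · rintro ⟨hlL, hlm⟩
    -- s ∣ l
    have hsl : s ∣ l := by
      by_cases hd : Nat.gcd l s ∣ m
      · -- then s = gcd s n = gcd s (lcm m l) = lcm g (gcd s l) ∣ m, contradiction
        exfalso
        have hlcmml : Nat.lcm m l = n := by
          by_contra h
          exact hlm ((Nat.dvd_lcm_right m l).trans
            (hmax _ (hlcm m hmL l hlL) h (Nat.dvd_lcm_left m l)).dvd)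
        have : s = Nat.lcm (Nat.gcd s m) (Nat.gcd s l) := by
          rw [← my_gcd_lcm_distrib s m l, hlcmml, Nat.gcd_eq_left (hLdvd s hsL)]
        apply hsm
        rw [this]
        exact Nat.lcm_dvd (Nat.gcd_dvd_right s m) (by rwa [Nat.gcd_comm s l])
      · have hdL : Nat.gcd l s ∈ L := hgcd l hlL s hsL
        have hle : s ≤ Nat.gcd l s := hmin _ hdL hd
        have hds : Nat.gcd l s ∣ s := Nat.gcd_dvd_right l s
        have : Nat.gcd l s = s := Nat.le_antisymm (Nat.le_of_dvd hspos hds) hle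
        rw [← this]; exact Nat.gcd_dvd_left l s
    have hgx : g ∣ Nat.gcd l m := Nat.dvd_gcd (hgs.trans hsl) hgm
    refine ⟨Nat.gcd l m, hgcd l hlL m hmL, Nat.gcd_dvd_right l m, hgx, ?_⟩
    rw [← key _ (Nat.gcd_dvd_right l m) hgx]
    calc l = Nat.gcd l n := (Nat.gcd_eq_left (hLdvd l hlL)).symm
    _ = Nat.gcd l (Nat.lcm m s) := by rw [hlcmms]
    _ = Nat.lcm (Nat.gcd l m) (Nat.gcd l s) := my_gcd_lcm_distrib l m s
    _ = Nat.lcm (Nat.gcd l m) s := by rw [Nat.gcd_eq_right hsl]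
  · rintro ⟨x, hxL, hxm, hgx, rfl⟩
    rw [← key x hxm hgx]
    refine ⟨hlcm x hxL s hsL, fun h => hsm ((Nat.dvd_lcm_right x s).trans h)⟩
end

section
/- Let n ≥ 1 and let L be a sublattice of the divisor lattice of n containing 1 and n, with L ≠ {1, n}. Let m be a maximal element of L \ {n} under divisibility and s the smallest element of L not dividing m. Then for every l ∈ L with l ∤ m, one has s ∣ l and l = lcm(s, gcd(m, l)). -/
lemma nat_gcd_lcm_distrib (a b c : ℕ) (ha : a ≠ 0) (hb : b ≠ 0) (hc : c ≠ 0) :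
    Nat.gcd a (Nat.lcm b c) = Nat.lcm (Nat.gcd a b) (Nat.gcd a c) := by
  have hbc : Nat.lcm b c ≠ 0 := Nat.lcm_ne_zero hb hc
  have hab : Nat.gcd a b ≠ 0 := Nat.gcd_ne_zero_left ha
  have hac : Nat.gcd a c ≠ 0 := Nat.gcd_ne_zero_left ha
  apply Nat.factorization_inj
  · simp [Nat.gcd_ne_zero_left ha]
  · simp [Nat.lcm_ne_zero hab hac]
  rw [Nat.factorization_gcd ha hbc, Nat.factorization_lcm hb hc,
    Nat.factorization_lcm hab hac, Nat.factorization_gcd ha hb,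
    Nat.factorization_gcd ha hc]
  ext p
  simp only [Finsupp.inf_apply, Finsupp.sup_apply]
  exact inf_sup_left _ _ _

/-- for `l ∈ L` not dividing `m`, `s ∣ l` and `l = lcm(s, gcd(m,l))`. -/
theorem stmt_1 (n : ℕ) (hn : 1 ≤ n) (L : Set ℕ)
    (hLpos : ∀ x ∈ L, 0 < x) (hLdvd : ∀ x ∈ L, x ∣ n)
    (h1L : 1 ∈ L) (hnL : n ∈ L)
    (hgcd : ∀ x ∈ L, ∀ y ∈ L, Nat.gcd x y ∈ L)
    (hlcm : ∀ x ∈ L, ∀ y ∈ L, Nat.lcm x y ∈ L)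
    (hne : L ≠ {1, n})
    (m : ℕ) (hmL : m ∈ L) (hmn : m ≠ n)
    (hmax : ∀ x ∈ L, x ≠ n → m ∣ x → x = m)
    (s : ℕ) (hsL : s ∈ L) (hsm : ¬ s ∣ m)
    (hmin : ∀ x ∈ L, ¬ x ∣ m → s ≤ x) :
    ∀ l ∈ L, ¬ l ∣ m → s ∣ l ∧ l = Nat.lcm s (Nat.gcd m l) := by
  have hkey : ∀ x ∈ L, ¬ x ∣ m → Nat.lcm m x = n := by
    intro x hxL hxm
    by_contra h
    have := hmax _ (hlcm m hmL x hxL) h (Nat.dvd_lcm_left m x)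
    exact hxm (this ▸ Nat.dvd_lcm_right m x)
  have hm0 : m ≠ 0 := (hLpos m hmL).ne'
  have hs0 : s ≠ 0 := (hLpos s hsL).ne'
  intro l hlL hlm
  have hl0 : l ≠ 0 := (hLpos l hlL).ne'
  -- s ∣ l
  have h1 : s = Nat.lcm (Nat.gcd s m) (Nat.gcd s l) := by
    have := nat_gcd_lcm_distrib s m l hs0 hm0 hl0
    rwa [hkey l hlL hlm, Nat.gcd_eq_left (hLdvd s hsL)] at this
  have hgsl : ¬ Nat.gcd s l ∣ m := by
    intro h
    exact hsm (h1 ▸ Nat.lcm_dvd (Nat.gcd_dvd_right s m) h)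
  have hle : s ≤ Nat.gcd s l := hmin _ (hgcd s hsL l hlL) hgsl
  have hge : Nat.gcd s l ≤ s := Nat.le_of_dvd (Nat.pos_of_ne_zero hs0) (Nat.gcd_dvd_left s l)
  have hsl : s ∣ l := by
    have : Nat.gcd s l = s := le_antisymm hge hle
    exact this ▸ Nat.gcd_dvd_right s l
  refine ⟨hsl, ?_⟩
  -- l = lcm s (gcd m l)
  have h2 := nat_gcd_lcm_distrib l s m hl0 hs0 hm0
  rw [Nat.lcm_comm, hkey s hsL hsm, Nat.gcd_eq_left (hLdvd l hlL),
    Nat.gcd_eq_right hsl, Nat.gcd_comm l m] at h2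
  exact h2
end

section
/- Let (I, ⪯) be a poset, and for each i ∈ I let X_i be a set. For J ⊆ I define the equivalence relation ∼_J on X = ∏_{i∈I} X_i by (x_i) ∼_J (y_i) iff x_j = y_j for all j ∈ J. Then for ancestral subsets J, J' of I, the equivalence relation of ∼_{J∪J'} equals the intersection of ∼_J and ∼_{J'}, and ∼_{J∩J'} contains the join (transitive closure of the union) of ∼_J and ∼_{J'}; in fact the partition associated to J∩J' is the join of the partitions associated to J and J'. -/
/-- The equivalence relation `∼_J` on `∏ i, X i`: agreement on all coordinates in `J`. -/
def eqvOn {I : Type*} (X : I → Type*) (J : Set I) : Setoid (∀ i, X i) :=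
  ⟨fun x y => ∀ j ∈ J, x j = y j,
   ⟨fun _ _ _ => rfl,
    fun h j hj => (h j hj).symm,
    fun h₁ h₂ j hj => (h₁ j hj).trans (h₂ j hj)⟩⟩

/-- for ancestral `J, J'`, the partition of `J ∪ J'` is the meet and the
partition of `J ∩ J'` is the join of the partitions of `J` and `J'`. -/
theorem stmt_5 {I : Type*} [PartialOrder I] (X : I → Type*) (J J' : Set I)
    (hJ : IsUpperSet J) (hJ' : IsUpperSet J') :
    eqvOn X (J ∪ J') = eqvOn X J ⊓ eqvOn X J' ∧
    eqvOn X (J ∩ J') = eqvOn X J ⊔ eqvOn X J' := by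
  classical
  constructor
  · apply le_antisymm
    · apply le_inf
      · exact Setoid.le_def.mpr fun h j hj => h j (Or.inl hj)
      · exact Setoid.le_def.mpr fun h j hj => h j (Or.inr hj)
    · refine Setoid.le_def.mpr fun h j hj => ?_
      rcases hj with hj | hj
      · exact h.1 j hj
      · exact h.2 j hj
  · apply le_antisymm
    · refine Setoid.le_def.mpr fun {x y} h => ?_
      set z : ∀ i, X i := fun i => if i ∈ J then x i else y i with hz
      have h1 : (eqvOn X J) x z := fun j hj => by simp [hz, hj]
      have h2 : (eqvOn X J') z y := fun j hj => by
        by_cases hjJ : j ∈ J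
        · simpa [hz, hjJ] using h j ⟨hjJ, hj⟩
        · simp [hz, hjJ]
      exact (eqvOn X J ⊔ eqvOn X J').trans'
        (Setoid.le_def.mp le_sup_left h1)
        (Setoid.le_def.mp (le_sup_right (a := eqvOn X J)) h2)
    · apply sup_le
      · exact Setoid.le_def.mpr fun h j hj => h j hj.1
      · exact Setoid.le_def.mpr fun h j hj => h j hj.2
end

section
/- Let P = ([r], ⪯) be an increasing poset (i ⪯ j implies i ≤ j) and n_1, …, n_r ∈ ℕ with each n_i ≥ 2, n = n_1⋯n_r, and gcd(n_i, n_j) = 1 whenever i ⋠ j. Then the set L = { ∏_{j ∉ J} n_j : J an ancestral subset of P } is a sublattice of the divisor lattice of n containing 1 and n (i.e., L is closed under gcd and lcm). -/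
/-- The set of numbers `∏_{j ∉ J} n_j`, for `J` an ancestral subset of the poset `P` on
`Fin r`. -/
def latticeOf (r : ℕ) (P : Fin r → Fin r → Prop) (nf : Fin r → ℕ) : Set ℕ :=
  {d | ∃ J : Finset (Fin r), (∀ i ∈ J, ∀ j, P i j → j ∈ J) ∧ d = ∏ j ∈ Jᶜ, nf j}

/-- for an increasing poset with coprimality conditions on the weights,
`L = {∏_{j ∉ J} n_j : J ancestral}` is a sublattice of the divisor lattice of `n`
containing `1` and `n`. -/
theorem stmt_7 (r n : ℕ) (P : Fin r → Fin r → Prop)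
    (hrefl : ∀ i, P i i) (hanti : ∀ i j, P i j → P j i → i = j)
    (htrans : ∀ i j k, P i j → P j k → P i k)
    (hincr : ∀ i j, P i j → i ≤ j)
    (nf : Fin r → ℕ) (h2 : ∀ i, 2 ≤ nf i) (hn : n = ∏ i, nf i)
    (hcop : ∀ i j, ¬ P i j → Nat.Coprime (nf i) (nf j)) :
    (∀ d ∈ latticeOf r P nf, d ∣ n) ∧
    1 ∈ latticeOf r P nf ∧ n ∈ latticeOf r P nf ∧
    (∀ a ∈ latticeOf r P nf, ∀ b ∈ latticeOf r P nf,
      Nat.gcd a b ∈ latticeOf r P nf ∧ Nat.lcm a b ∈ latticeOf r P nf) := by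
  -- pairwise coprimality
  have hcop' : ∀ i j : Fin r, i ≠ j → Nat.Coprime (nf i) (nf j) := by
    intro i j hij
    by_cases h : P i j
    · exact (hcop j i (fun hji => hij (hanti i j h hji))).symm
    · exact hcop i j h
  have hdisj : ∀ A B : Finset (Fin r), Disjoint A B →
      Nat.Coprime (∏ i ∈ A, nf i) (∏ i ∈ B, nf i) := by
    intro A B hAB
    apply Nat.Coprime.prod_left; intro i hi
    apply Nat.Coprime.prod_right; intro j hj
    exact hcop' i j (fun h => Finset.disjoint_left.mp hAB hi (h ▸ hj))
  have hgcd : ∀ A B : Finset (Fin r),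
      Nat.gcd (∏ i ∈ A, nf i) (∏ i ∈ B, nf i) = ∏ i ∈ A ∩ B, nf i := by
    intro A B
    have hA : ∏ i ∈ A, nf i = (∏ i ∈ A ∩ B, nf i) * ∏ i ∈ A \ B, nf i :=
      (Finset.prod_inter_mul_prod_diff A B nf).symm
    have hB : ∏ i ∈ B, nf i = (∏ i ∈ A ∩ B, nf i) * ∏ i ∈ B \ A, nf i := by
      rw [Finset.inter_comm]
      exact (Finset.prod_inter_mul_prod_diff B A nf).symm
    rw [hA, hB, Nat.gcd_mul_left]
    have : Nat.Coprime (∏ i ∈ A \ B, nf i) (∏ i ∈ B \ A, nf i) :=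
      hdisj _ _ disjoint_sdiff_sdiff
    rw [this, mul_one]
  have hpos : ∀ A : Finset (Fin r), 0 < ∏ i ∈ A, nf i := by
    intro A
    exact Finset.prod_pos (fun i _ => lt_of_lt_of_le (by norm_num) (h2 i))
  have hlcm : ∀ A B : Finset (Fin r),
      Nat.lcm (∏ i ∈ A, nf i) (∏ i ∈ B, nf i) = ∏ i ∈ A ∪ B, nf i := by
    intro A B
    have key : (∏ i ∈ A ∩ B, nf i) * Nat.lcm (∏ i ∈ A, nf i) (∏ i ∈ B, nf i)
        = (∏ i ∈ A ∩ B, nf i) * ∏ i ∈ A ∪ B, nf i := by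
      calc (∏ i ∈ A ∩ B, nf i) * Nat.lcm (∏ i ∈ A, nf i) (∏ i ∈ B, nf i)
          = Nat.gcd (∏ i ∈ A, nf i) (∏ i ∈ B, nf i)
            * Nat.lcm (∏ i ∈ A, nf i) (∏ i ∈ B, nf i) := by rw [hgcd]
        _ = (∏ i ∈ A, nf i) * ∏ i ∈ B, nf i := Nat.gcd_mul_lcm _ _
        _ = (∏ i ∈ A ∪ B, nf i) * ∏ i ∈ A ∩ B, nf i :=
            (Finset.prod_union_inter).symm
        _ = (∏ i ∈ A ∩ B, nf i) * ∏ i ∈ A ∪ B, nf i := mul_comm _ _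
    exact Nat.eq_of_mul_eq_mul_left (hpos (A ∩ B)) key
  refine ⟨?_, ⟨Finset.univ, fun i _ j _ => Finset.mem_univ j, by simp⟩,
    ⟨∅, by simp, by simp [hn]⟩, ?_⟩
  · rintro d ⟨J, hJ, rfl⟩
    rw [hn]
    exact Finset.prod_dvd_prod_of_subset _ _ _ (Finset.subset_univ _)
  · rintro a ⟨J, hJ, rfl⟩ b ⟨K, hK, rfl⟩
    constructor
    · refine ⟨J ∪ K, ?_, ?_⟩
      · intro i hi j hij
        rcases Finset.mem_union.mp hi with h | h
        · exact Finset.mem_union_left _ (hJ i h j hij)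
        · exact Finset.mem_union_right _ (hK i h j hij)
      · rw [hgcd, ← Finset.compl_union]
    · refine ⟨J ∩ K, ?_, ?_⟩
      · intro i hi j hij
        exact Finset.mem_inter.mpr ⟨hJ i (Finset.mem_inter.mp hi).1 j hij,
          hK i (Finset.mem_inter.mp hi).2 j hij⟩
      · rw [hlcm, ← Finset.compl_inter]
end

section
/- Let P = ([r], ⪯) be an increasing poset with weights n_1,…,n_r ≥ 2 satisfying n = n_1⋯n_r and gcd(n_i, n_j) = 1 whenever i ⋠ j. Define f : ∏_{i=1}^r (Fin n_i) → ZMod n by f(x) = Σ_{i=1}^{r} (∏_{j: j ⋠ i} n_j) · x_i (mod n). Then f is a bijection. -/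
/-- the map `f(x) = Σ_i (∏_{j ⋠ i} n_j)·x_i (mod n)` is a bijection from
`∏ i, Fin n_i` to `ZMod n`. -/
theorem stmt_9 (r n : ℕ) (P : Fin r → Fin r → Prop) [DecidableRel P]
    (hrefl : ∀ i, P i i) (hanti : ∀ i j, P i j → P j i → i = j)
    (htrans : ∀ i j k, P i j → P j k → P i k)
    (hincr : ∀ i j, P i j → i ≤ j)
    (nf : Fin r → ℕ) (h2 : ∀ i, 2 ≤ nf i) (hn : n = ∏ i, nf i)
    (hcop : ∀ i j, ¬ P i j → Nat.Coprime (nf i) (nf j)) :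
    Function.Bijective (fun x : (∀ i, Fin (nf i)) =>
      ∑ i : Fin r,
        ((∏ j ∈ Finset.univ.filter (fun j => ¬ P j i), nf j : ℕ) : ZMod n)
          * ((x i : ℕ) : ZMod n)) := by
  have hn0 : 0 < n := by
    rw [hn]
    exact Finset.prod_pos (fun i _ => by linarith [h2 i])
  haveI : NeZero n := ⟨hn0.ne'⟩
  set c : Fin r → ℕ := fun i => ∏ j ∈ Finset.univ.filter (fun j => ¬ P j i), nf j with hc
  have hinj : Function.Injective (fun x : (∀ i, Fin (nf i)) =>
      ∑ i : Fin r,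
        ((∏ j ∈ Finset.univ.filter (fun j => ¬ P j i), nf j : ℕ) : ZMod n)
          * ((x i : ℕ) : ZMod n)) := by
    intro x y hxy
    by_contra hne
    have hS : (Finset.univ.filter (fun k => x k ≠ y k)).Nonempty := by
      by_contra h
      apply hne
      funext k
      rw [Finset.not_nonempty_iff_eq_empty, Finset.filter_eq_empty_iff] at h
      have := h (Finset.mem_univ k)
      simpa using this
    set k := (Finset.univ.filter (fun k => x k ≠ y k)).max' hS with hk
    have hkmem := (Finset.univ.filter (fun k => x k ≠ y k)).max'_mem hS
    rw [Finset.mem_filter] at hkmem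
    have hgt : ∀ j, k < j → x j = y j := by
      intro j hj
      by_contra hxj
      have : j ≤ k := Finset.le_max' _ j (by simp [hxj])
      exact absurd hj (not_lt.mpr this)
    -- integer congruence
    have hAB : (((∑ i, (c i : ℤ) * ((x i : ℕ) : ℤ) : ℤ)) : ZMod n)
        = (((∑ i, (c i : ℤ) * ((y i : ℕ) : ℤ) : ℤ)) : ZMod n) := by
      push_cast
      simpa [hc] using hxy
    have hdvdn : (n : ℤ) ∣ (∑ i, (c i : ℤ) * ((y i : ℕ) : ℤ))
        - (∑ i, (c i : ℤ) * ((x i : ℕ) : ℤ)) :=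
      ((ZMod.intCast_eq_intCast_iff _ _ _).mp hAB).dvd
    have hdvdnk : (nf k : ℤ) ∣ ∑ i, (c i : ℤ) * (((y i : ℕ) : ℤ) - ((x i : ℕ) : ℤ)) := by
      have h1 : (nf k : ℤ) ∣ (n : ℤ) := by
        exact_mod_cast Int.natCast_dvd_natCast.mpr (hn ▸ Finset.dvd_prod_of_mem nf (Finset.mem_univ k))
      calc (nf k : ℤ) ∣ (∑ i, (c i : ℤ) * ((y i : ℕ) : ℤ))
            - (∑ i, (c i : ℤ) * ((x i : ℕ) : ℤ)) := h1.trans hdvdn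
        _ = ∑ i, (c i : ℤ) * (((y i : ℕ) : ℤ) - ((x i : ℕ) : ℤ)) := by
            rw [← Finset.sum_sub_distrib]
            exact Finset.sum_congr rfl fun i _ => by ring
    -- split off index k
    have hsplit : ∑ i, (c i : ℤ) * (((y i : ℕ) : ℤ) - ((x i : ℕ) : ℤ))
        = (c k : ℤ) * (((y k : ℕ) : ℤ) - ((x k : ℕ) : ℤ))
          + ∑ i ∈ Finset.univ.erase k, (c i : ℤ) * (((y i : ℕ) : ℤ) - ((x i : ℕ) : ℤ)) :=
      (Finset.add_sum_erase _ _ (Finset.mem_univ k)).symm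
    have hrest : (nf k : ℤ) ∣ ∑ i ∈ Finset.univ.erase k,
        (c i : ℤ) * (((y i : ℕ) : ℤ) - ((x i : ℕ) : ℤ)) := by
      apply Finset.dvd_sum
      intro i hi
      have hik : i ≠ k := (Finset.mem_erase.mp hi).1
      rcases lt_or_gt_of_ne hik with h | h
      · -- i < k : nf k ∣ c i
        have hnP : ¬ P k i := fun hP => absurd (hincr k i hP) (not_le.mpr h)
        have : nf k ∣ c i := Finset.dvd_prod_of_mem nf (by simp [hnP])
        exact Dvd.dvd.mul_right (Int.natCast_dvd_natCast.mpr this) _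
      · -- k < i : x i = y i
        rw [hgt i h]
        simp
    have hck : (nf k : ℤ) ∣ (c k : ℤ) * (((y k : ℕ) : ℤ) - ((x k : ℕ) : ℤ)) := by
      have := hdvdnk
      rw [hsplit] at this
      exact (dvd_add_right hrest).mp (by rwa [add_comm] at this)
    have hcopk : IsCoprime ((nf k : ℤ)) ((c k : ℤ)) := by
      rw [Int.isCoprime_iff_gcd_eq_one]
      have : Nat.Coprime (nf k) (c k) := by
        apply Nat.Coprime.prod_right
        intro j hj
        rw [Finset.mem_filter] at hj
        exact (hcop j k hj.2).symm
      simpa [Int.gcd_natCast_natCast] using this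
    have hdvd : (nf k : ℤ) ∣ (((y k : ℕ) : ℤ) - ((x k : ℕ) : ℤ)) := by
      rcases hck with ⟨m, hm⟩
      exact hcopk.dvd_of_dvd_mul_left ⟨m, by linarith [hm]⟩
    have hx := (x k).isLt
    have hy := (y k).isLt
    have : ((y k : ℕ) : ℤ) - ((x k : ℕ) : ℤ) = 0 := by
      refine Int.eq_zero_of_abs_lt_dvd hdvd ?_
      rw [abs_lt]
      constructor <;> [skip; skip] <;> push_cast <;> omega
    have hxyk : (x k : ℕ) = (y k : ℕ) := by omega
    exact hkmem.2 (Fin.ext hxyk)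
  refine (Fintype.bijective_iff_injective_and_card _).mpr ⟨hinj, ?_⟩
  simp [ZMod.card, hn, Fintype.card_pi]
end

section
/- Let P = ([r], ⪯) be an increasing poset with weights n_1,…,n_r ≥ 2 satisfying n = n_1⋯n_r and gcd(n_i, n_j) = 1 whenever i ⋠ j. Let J be an ancestral subset of P and suppose Σ_{j ∉ J} (∏_{i: i ⋠ j} n_i)·x_j ≡ Σ_{j ∉ J} (∏_{i: i ⋠ j} n_i)·y_j (mod n) where x_j, y_j ∈ {0,…,n_j−1} for each j ∉ J. Then x_j = y_j for all j ∉ J. -/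
/-- if the weighted sums over the complement of an ancestral set `J` agree
mod `n`, then the corresponding coordinates agree. -/
theorem stmt_10 (r n : ℕ) (P : Fin r → Fin r → Prop) [DecidableRel P]
    (hrefl : ∀ i, P i i) (hanti : ∀ i j, P i j → P j i → i = j)
    (htrans : ∀ i j k, P i j → P j k → P i k)
    (hincr : ∀ i j, P i j → i ≤ j)
    (nf : Fin r → ℕ) (h2 : ∀ i, 2 ≤ nf i) (hn : n = ∏ i, nf i)
    (hcop : ∀ i j, ¬ P i j → Nat.Coprime (nf i) (nf j))
    (J : Finset (Fin r)) (hJ : ∀ i ∈ J, ∀ j, P i j → j ∈ J)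
    (x y : ∀ i, Fin (nf i))
    (hsum : ∑ j ∈ Jᶜ,
        ((∏ i ∈ Finset.univ.filter (fun i => ¬ P i j), nf i : ℕ) : ZMod n)
          * ((x j : ℕ) : ZMod n)
      = ∑ j ∈ Jᶜ,
        ((∏ i ∈ Finset.univ.filter (fun i => ¬ P i j), nf i : ℕ) : ZMod n)
          * ((y j : ℕ) : ZMod n)) :
    ∀ j ∈ Jᶜ, x j = y j := by
  obtain ⟨m, hm⟩ : ∃ m, Jᶜ.card = m := ⟨_, rfl⟩
  induction m using Nat.strong_induction_on generalizing J with
  | _ m ih =>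
  intro j hj
  have hne : Jᶜ.Nonempty := ⟨j, hj⟩
  set k := Jᶜ.max' hne with hkdef
  have hkmem : k ∈ Jᶜ := Jᶜ.max'_mem hne
  have hknf : NeZero (nf k) := ⟨by have := h2 k; omega⟩
  have hdvd : nf k ∣ n := hn ▸ Finset.dvd_prod_of_mem nf (Finset.mem_univ k)
  -- weights
  set w : Fin r → ℕ := fun j => ∏ i ∈ Finset.univ.filter (fun i => ¬ P i j), nf i with hw
  -- for j' ∈ Jᶜ with j' ≠ k, nf k divides w j'
  have hzero : ∀ j' ∈ Jᶜ, j' ≠ k → ((w j' : ℕ) : ZMod (nf k)) = 0 := by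
    intro j' hj' hne'
    have hnP : ¬ P k j' := by
      intro hP
      exact hne' (le_antisymm (Jᶜ.le_max' j' hj') (hincr _ _ hP))
    have : nf k ∣ w j' :=
      Finset.dvd_prod_of_mem nf (by simp [hnP])
    exact (ZMod.natCast_eq_zero_iff _ _).mpr this
  -- reduce hsum mod nf k
  have hsum' : ((w k : ℕ) : ZMod (nf k)) * ((x k : ℕ) : ZMod (nf k))
      = ((w k : ℕ) : ZMod (nf k)) * ((y k : ℕ) : ZMod (nf k)) := by
    have := congrArg (ZMod.castHom hdvd (ZMod (nf k))) hsum
    rw [map_sum, map_sum] at this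
    simp only [map_mul, map_natCast] at this
    rwa [Finset.sum_eq_single_of_mem k hkmem
        (fun b hb hbk => by rw [hzero b hb hbk, zero_mul]),
      Finset.sum_eq_single_of_mem k hkmem
        (fun b hb hbk => by rw [hzero b hb hbk, zero_mul])] at this
  -- w k is coprime to nf k, hence a unit mod nf k
  have hcopk : Nat.Coprime (w k) (nf k) :=
    Nat.Coprime.prod_left (fun i hi => hcop i k (by simpa using hi))
  have hunit : IsUnit ((w k : ℕ) : ZMod (nf k)) :=
    (ZMod.isUnit_iff_coprime _ _).mpr hcopk
  have hxyk : x k = y k := by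
    have hcast : ((x k : ℕ) : ZMod (nf k)) = ((y k : ℕ) : ZMod (nf k)) :=
      hunit.mul_left_cancel hsum'
    have := congrArg ZMod.val hcast
    rw [ZMod.val_cast_of_lt (x k).2, ZMod.val_cast_of_lt (y k).2] at this
    exact Fin.ext this
  rcases eq_or_ne j k with rfl | hjk
  · exact hxyk
  -- induction step with J' = insert k J
  have hJ' : ∀ i ∈ insert k J, ∀ j, P i j → j ∈ insert k J := by
    intro i hi j' hP
    rcases Finset.mem_insert.mp hi with rfl | hi
    · by_contra hjJ
      have hj'c : j' ∈ Jᶜ := by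
        simp only [Finset.mem_compl]
        intro h'
        exact hjJ (Finset.mem_insert_of_mem h')
      have : j' = k :=
        le_antisymm (Jᶜ.le_max' j' hj'c) (hincr _ _ hP)
      exact hjJ (this ▸ Finset.mem_insert_self _ _)
    · exact Finset.mem_insert_of_mem (hJ i hi j' hP)
  have hcompl : (insert k J)ᶜ = Jᶜ.erase k := by
    ext a; simp [Finset.mem_erase, and_comm]
  have hcard : (insert k J)ᶜ.card = m - 1 := by
    rw [hcompl, Finset.card_erase_of_mem hkmem, hm]
  have hmpos : 0 < m := by
    rw [← hm]; exact Finset.card_pos.mpr hne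
  have hsum'' : ∑ j ∈ (insert k J)ᶜ, ((w j : ℕ) : ZMod n) * ((x j : ℕ) : ZMod n)
      = ∑ j ∈ (insert k J)ᶜ, ((w j : ℕ) : ZMod n) * ((y j : ℕ) : ZMod n) := by
    rw [hcompl, Finset.sum_erase_eq_sub hkmem, Finset.sum_erase_eq_sub hkmem,
      hsum, hxyk]
  have := ih (m - 1) (by omega) (insert k J) hJ' hsum'' hcard j
  apply this
  rw [hcompl]
  exact Finset.mem_erase.mpr ⟨hjk, hj⟩
end

section
/- Let ([r], ⪯) be a poset with sets X_i (|X_i| ≥ 2) and groups K_i ≤ Sym(X_i). The generalized wreath product ∏_{([r],⪯)} K_i ≤ Sym(∏ X_i) has order ∏_{i=1}^{r} |K_i|^{m_i}, where m_i = ∏_{j: i ≺ j} |X_j| (the empty product being 1, which occurs exactly when {i} is ancestral). -/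
section GW

variable {r : ℕ} (P : Fin r → Fin r → Prop) [DecidableRel P] (Xf : Fin r → Type*)

/-- projection onto the coordinates strictly above `i`. -/
def gwProj (i : Fin r) (x : ∀ j, Xf j) : ∀ j : {j : Fin r // P i j ∧ j ≠ i}, Xf j.1 :=
  fun j => x j.1

lemma gwProj_update (i : Fin r) (x : ∀ j, Xf j) (a : Xf i) :
    gwProj P Xf i (Function.update x i a) = gwProj P Xf i x := by
  funext j
  exact Function.update_of_ne j.2.2 _ x

/-- the coordinate permutation determined by `f`. -/
def gwPerm (i : Fin r)
    (f : (∀ j : {j : Fin r // P i j ∧ j ≠ i}, Xf j.1) → Equiv.Perm (Xf i)) :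
    Equiv.Perm (∀ j, Xf j) where
  toFun x := Function.update x i (f (gwProj P Xf i x) (x i))
  invFun x := Function.update x i ((f (gwProj P Xf i x))⁻¹ (x i))
  left_inv x := by
    simp [gwProj_update, Function.update_idem]
  right_inv x := by
    simp [gwProj_update, Function.update_idem]

lemma gwPerm_apply (i : Fin r)
    (f : (∀ j : {j : Fin r // P i j ∧ j ≠ i}, Xf j.1) → Equiv.Perm (Xf i)) (x) :
    gwPerm P Xf i f x = Function.update x i (f (gwProj P Xf i x) (x i)) := rfl

lemma gwPerm_apply_ne (i : Fin r) (f) (x) {j : Fin r} (hj : j ≠ i) :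
    gwPerm P Xf i f x j = x j := Function.update_of_ne hj _ x

/-- coordinates not touched by a product of `gwPerm`s are unchanged. -/
lemma gwProd_apply_ne (f : ∀ i, (∀ j : {j : Fin r // P i j ∧ j ≠ i}, Xf j.1) → Equiv.Perm (Xf i))
    (L : List (Fin r)) (x : ∀ j, Xf j) {j : Fin r} (hj : j ∉ L) :
    (L.map fun i => gwPerm P Xf i (f i)).prod x j = x j := by
  induction L with
  | nil => simp
  | cons a L ih =>
    simp only [List.map_cons, List.prod_cons, Equiv.Perm.mul_apply]
    rw [gwPerm_apply_ne P Xf a _ _ (fun h : j = a => hj (h ▸ List.mem_cons_self (a := a) (l := L))),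
      ih (fun h => hj (List.mem_cons_of_mem a h))]

end GW

section GW2

variable {r : ℕ} (P : Fin r → Fin r → Prop) [DecidableRel P] (Xf : Fin r → Type*)

lemma gw_exists_point (hne : ∀ j, Nonempty (Xf j)) (i : Fin r)
    (v : ∀ j : {j : Fin r // P i j ∧ j ≠ i}, Xf j.1) (c : Xf i) :
    ∃ x : ∀ j, Xf j, x i = c ∧ gwProj P Xf i x = v := by
  classical
  refine ⟨Function.update
    (fun j => if h : P i j ∧ j ≠ i then v ⟨j, h⟩ else (hne j).some) i c, ?_, ?_⟩
  · exact Function.update_self i c _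
  · rw [gwProj_update]
    funext j
    simp only [gwProj, dif_pos j.2]

lemma gw_list_inj (hne : ∀ j, Nonempty (Xf j)) (L : List (Fin r)) (hL : L.Nodup)
    (f g : ∀ i, (∀ j : {j : Fin r // P i j ∧ j ≠ i}, Xf j.1) → Equiv.Perm (Xf i))
    (h : (L.map fun i => gwPerm P Xf i (f i)).prod
        = (L.map fun i => gwPerm P Xf i (g i)).prod) :
    ∀ i ∈ L, f i = g i := by
  induction L using List.reverseRecOn with
  | nil => simp
  | append_singleton L a ih =>
    rw [List.nodup_append] at hL
    obtain ⟨hL', -, hdisj⟩ := hL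
    have ha : a ∉ L := fun hmem => hdisj a hmem a (List.mem_singleton_self a) rfl
    rw [List.map_append, List.prod_append, List.map_append, List.prod_append,
      List.map_singleton, List.prod_singleton, List.map_singleton,
      List.prod_singleton] at h
    have hfa : f a = g a := by
      funext v
      apply Equiv.ext
      intro c
      obtain ⟨x, hx1, hx2⟩ := gw_exists_point P Xf hne a v c
      have hx := congrFun (congrArg (fun (e : Equiv.Perm (∀ j, Xf j)) => ⇑e) h) x
      have hxa := congrFun hx a
      simp only [Equiv.Perm.mul_apply] at hxa
      rw [gwProd_apply_ne P Xf f L _ ha, gwProd_apply_ne P Xf g L _ ha,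
        gwPerm_apply, gwPerm_apply, Function.update_self, Function.update_self,
        hx1, hx2] at hxa
      exact hxa
    have hHL : (L.map fun i => gwPerm P Xf i (f i)).prod
        = (L.map fun i => gwPerm P Xf i (g i)).prod := by
      rw [hfa] at h
      exact mul_right_cancel h
    intro i hi
    rcases List.mem_append.1 hi with h1 | h2
    · exact ih hL' hHL i h1
    · rw [List.mem_singleton] at h2
      exact h2 ▸ hfa

end GW2


/-- the generalized wreath product `∏_{([r],⪯)} K_i`, i.e. the complexus
product `P_1 ⋯ P_r` of the coordinate factors, has order
`∏ i, |K_i| ^ (∏_{j : i ≺ j} |X_j|)`. -/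
theorem stmt_16 (r : ℕ) (P : Fin r → Fin r → Prop) [DecidableRel P]
    (hrefl : ∀ i, P i i) (hanti : ∀ i j, P i j → P j i → i = j)
    (htrans : ∀ i j k, P i j → P j k → P i k)
    (Xf : Fin r → Type*) [∀ i, Fintype (Xf i)]
    (hX : ∀ i, 2 ≤ Fintype.card (Xf i))
    (K : ∀ i, Subgroup (Equiv.Perm (Xf i))) :
    Nat.card {g : Equiv.Perm (∀ i, Xf i) |
        ∃ p : Fin r → Equiv.Perm (∀ i, Xf i),
          (∀ i, ∃ f : ((∀ j : {j : Fin r // P i j ∧ j ≠ i}, Xf j.1) → Equiv.Perm (Xf i)),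
            (∀ v, f v ∈ K i) ∧
            ∀ x : ∀ j, Xf j, p i x = Function.update x i ((f fun j => x j.1) (x i))) ∧
          g = (List.ofFn p).prod}
      = ∏ i : Fin r,
          Nat.card (K i) ^ (∏ j ∈ Finset.univ.filter (fun j => P i j ∧ j ≠ i),
            Fintype.card (Xf j)) := by
  classical
  have hne : ∀ j, Nonempty (Xf j) :=
    fun j => Fintype.card_pos_iff.mp (lt_of_lt_of_le two_pos (hX j))
  set Φ : (∀ i, ((∀ j : {j : Fin r // P i j ∧ j ≠ i}, Xf j.1) → (K i)))
      → Equiv.Perm (∀ i, Xf i) :=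
    fun f => (List.ofFn fun i =>
      gwPerm P Xf i (fun v => (f i v : Equiv.Perm (Xf i)))).prod with hΦ
  have hinj : Function.Injective Φ := by
    intro f g h
    simp only [hΦ, List.ofFn_eq_map] at h
    have hall := gw_list_inj P Xf hne (List.finRange r) (List.nodup_finRange r)
      (fun i v => (f i v : Equiv.Perm (Xf i))) (fun i v => (g i v : Equiv.Perm (Xf i))) h
    funext i v
    exact Subtype.ext (congrFun (hall i (List.mem_finRange i)) v)
  have hset : {g : Equiv.Perm (∀ i, Xf i) |
        ∃ p : Fin r → Equiv.Perm (∀ i, Xf i),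
          (∀ i, ∃ f : ((∀ j : {j : Fin r // P i j ∧ j ≠ i}, Xf j.1) → Equiv.Perm (Xf i)),
            (∀ v, f v ∈ K i) ∧
            ∀ x : ∀ j, Xf j, p i x = Function.update x i ((f fun j => x j.1) (x i))) ∧
          g = (List.ofFn p).prod} = Set.range Φ := by
    ext g
    constructor
    · rintro ⟨p, hp, rfl⟩
      choose f hf1 hf2 using hp
      refine ⟨fun i v => ⟨f i v, hf1 i v⟩, ?_⟩
      simp only [hΦ]
      have hpe : (fun i => gwPerm P Xf i fun v => ((f i v : Equiv.Perm (Xf i)))) = p :=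
        funext fun i => Equiv.ext fun x => (hf2 i x).symm
      rw [hpe]
    · rintro ⟨f, rfl⟩
      exact ⟨fun i => gwPerm P Xf i (fun v => (f i v : Equiv.Perm (Xf i))),
        fun i => ⟨fun v => (f i v : Equiv.Perm (Xf i)), fun v => (f i v).2,
          fun x => rfl⟩, rfl⟩
  rw [hset, Nat.card_range_of_injective hinj, Nat.card_pi]
  refine Finset.prod_congr rfl fun i _ => ?_
  rw [Nat.card_fun]
  congr 1
  rw [Nat.card_eq_fintype_card, Fintype.card_pi]
  exact (Finset.prod_subtype (Finset.univ.filter fun j => P i j ∧ j ≠ i)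
    (by simp) (fun j => Fintype.card (Xf j))).symm
end

section
/- Let n₁, n₂ ∈ ℕ, let L₁ be a sublattice of the divisor lattice of n₁ with 1, n₁ ∈ L₁, let L₂ be a sublattice of the divisor lattice of n₂ with 1, n₂ ∈ L₂, and let d ∈ L₂ with gcd(n₁, n₂/d) = 1. Then the crested product L₁ ⊗_d L₂ = { l₁·l₂ : (l₁ = 1 and l₂ ∈ L₂) or (l₁ ∈ L₁ and l₂ ∈ L₂ with d ∣ l₂) } is a sublattice of the divisor lattice of n₁·n₂ containing 1 and n₁n₂. -/
lemma aux_gcd_split (a b c e : ℕ) (hab : Nat.Coprime a b) (hae : Nat.Coprime a e)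
    (hcb : Nat.Coprime c b) :
    Nat.gcd (a * b) (c * e) = Nat.gcd a c * Nat.gcd b e := by
  apply Nat.dvd_antisymm
  · set g := Nat.gcd (a * b) (c * e) with hg
    have hgab : g ∣ a * b := Nat.gcd_dvd_left _ _
    have hgce : g ∣ c * e := Nat.gcd_dvd_right _ _
    have hsplit : g = Nat.gcd g a * Nat.gcd g b := by
      rw [← Nat.Coprime.gcd_mul g hab, Nat.gcd_eq_left hgab]
    have h1 : Nat.gcd g a ∣ c :=
      (Nat.Coprime.coprime_dvd_left (Nat.gcd_dvd_right g a) hae).dvd_of_dvd_mul_right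
        ((Nat.gcd_dvd_left g a).trans hgce)
    have h2 : Nat.gcd g b ∣ e :=
      (Nat.Coprime.coprime_dvd_left (Nat.gcd_dvd_right g b) hcb.symm).dvd_of_dvd_mul_left
        ((Nat.gcd_dvd_left g b).trans hgce)
    calc g = Nat.gcd g a * Nat.gcd g b := hsplit
      _ ∣ Nat.gcd a c * Nat.gcd b e :=
        mul_dvd_mul (Nat.dvd_gcd (Nat.gcd_dvd_right g a) h1)
          (Nat.dvd_gcd (Nat.gcd_dvd_right g b) h2)
  · have hcp : Nat.Coprime (Nat.gcd a c) (Nat.gcd b e) :=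
      Nat.Coprime.coprime_dvd_left (Nat.gcd_dvd_left a c)
        (Nat.Coprime.coprime_dvd_right (Nat.gcd_dvd_right b e) hae)
    refine hcp.mul_dvd_of_dvd_of_dvd ?_ ?_
    · exact Nat.dvd_gcd ((Nat.gcd_dvd_left a c).trans (dvd_mul_right a b))
        ((Nat.gcd_dvd_right a c).trans (dvd_mul_right c e))
    · exact Nat.dvd_gcd ((Nat.gcd_dvd_left b e).trans (dvd_mul_left b a))
        ((Nat.gcd_dvd_right b e).trans (dvd_mul_left e c))

lemma crest_gcd (n₁ n₂ d l₁ l₂ m₁ m₂ : ℕ) (hn₂ : 0 < n₂) (hdn : d ∣ n₂)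
    (hcop : Nat.Coprime n₁ (n₂ / d)) (hl₁ : l₁ ∣ n₁) (hm₁ : m₁ ∣ n₁)
    (hl₂ : l₂ ∣ n₂) (hm₂ : m₂ ∣ n₂) (hdl : d ∣ l₂) (hdm : d ∣ m₂) :
    Nat.gcd (l₁ * l₂) (m₁ * m₂) = Nat.gcd l₁ m₁ * Nat.gcd l₂ m₂ := by
  have hd0 : 0 < d := Nat.pos_of_dvd_of_pos hdn hn₂
  obtain ⟨l₂', rfl⟩ := hdl
  obtain ⟨m₂', rfl⟩ := hdm
  have hn₂eq : n₂ = d * (n₂ / d) := (Nat.mul_div_cancel' hdn).symm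
  have hl₂' : l₂' ∣ n₂ / d := by
    have := hl₂; rw [hn₂eq] at this
    exact (mul_dvd_mul_iff_left hd0.ne').mp this
  have hm₂' : m₂' ∣ n₂ / d := by
    have := hm₂; rw [hn₂eq] at this
    exact (mul_dvd_mul_iff_left hd0.ne').mp this
  have c1 : Nat.Coprime l₁ l₂' :=
    Nat.Coprime.coprime_dvd_left hl₁ (Nat.Coprime.coprime_dvd_right hl₂' hcop)
  have c2 : Nat.Coprime l₁ m₂' :=
    Nat.Coprime.coprime_dvd_left hl₁ (Nat.Coprime.coprime_dvd_right hm₂' hcop)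
  have c3 : Nat.Coprime m₁ l₂' :=
    Nat.Coprime.coprime_dvd_left hm₁ (Nat.Coprime.coprime_dvd_right hl₂' hcop)
  calc Nat.gcd (l₁ * (d * l₂')) (m₁ * (d * m₂'))
      = Nat.gcd (d * (l₁ * l₂')) (d * (m₁ * m₂')) := by ring_nf
    _ = d * Nat.gcd (l₁ * l₂') (m₁ * m₂') := Nat.gcd_mul_left d _ _
    _ = d * (Nat.gcd l₁ m₁ * Nat.gcd l₂' m₂') := by rw [aux_gcd_split _ _ _ _ c1 c2 c3]
    _ = Nat.gcd l₁ m₁ * (d * Nat.gcd l₂' m₂') := by ring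
    _ = Nat.gcd l₁ m₁ * Nat.gcd (d * l₂') (d * m₂') := by rw [Nat.gcd_mul_left]

lemma crest_lcm (n₁ n₂ d l₁ l₂ m₁ m₂ : ℕ) (hn₁ : 0 < n₁) (hn₂ : 0 < n₂) (hdn : d ∣ n₂)
    (hcop : Nat.Coprime n₁ (n₂ / d)) (hl₁ : l₁ ∣ n₁) (hm₁ : m₁ ∣ n₁)
    (hl₂ : l₂ ∣ n₂) (hm₂ : m₂ ∣ n₂) (hdl : d ∣ l₂) (hdm : d ∣ m₂) :
    Nat.lcm (l₁ * l₂) (m₁ * m₂) = Nat.lcm l₁ m₁ * Nat.lcm l₂ m₂ := by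
  have hx : 0 < l₁ * l₂ :=
    Nat.mul_pos (Nat.pos_of_dvd_of_pos hl₁ hn₁) (Nat.pos_of_dvd_of_pos hl₂ hn₂)
  have hy : 0 < m₁ * m₂ :=
    Nat.mul_pos (Nat.pos_of_dvd_of_pos hm₁ hn₁) (Nat.pos_of_dvd_of_pos hm₂ hn₂)
  have hG : 0 < Nat.gcd (l₁ * l₂) (m₁ * m₂) := Nat.gcd_pos_of_pos_left _ hx
  apply Nat.eq_of_mul_eq_mul_left hG
  rw [Nat.gcd_mul_lcm,
    crest_gcd n₁ n₂ d l₁ l₂ m₁ m₂ hn₂ hdn hcop hl₁ hm₁ hl₂ hm₂ hdl hdm]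
  calc l₁ * l₂ * (m₁ * m₂)
      = (Nat.gcd l₁ m₁ * Nat.lcm l₁ m₁) * (Nat.gcd l₂ m₂ * Nat.lcm l₂ m₂) := by
        rw [Nat.gcd_mul_lcm, Nat.gcd_mul_lcm]; ring
    _ = Nat.gcd l₁ m₁ * Nat.gcd l₂ m₂ * (Nat.lcm l₁ m₁ * Nat.lcm l₂ m₂) := by ring

lemma crest_gcd_mixed (n₁ n₂ d a m₁ m₂ : ℕ) (hn₂ : 0 < n₂) (hdn : d ∣ n₂)
    (hcop : Nat.Coprime n₁ (n₂ / d)) (ha : a ∣ n₂) (hm₁ : m₁ ∣ n₁)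
    (hm₂ : m₂ ∣ n₂) (hdm : d ∣ m₂) :
    Nat.gcd a (m₁ * m₂) = Nat.gcd a m₂ := by
  apply Nat.dvd_antisymm
  · have key : Nat.gcd n₂ (m₁ * m₂) = m₂ := by
      have := crest_gcd n₁ n₂ d 1 n₂ m₁ m₂ hn₂ hdn hcop (one_dvd _) hm₁ dvd_rfl hm₂ hdn hdm
      rw [one_mul] at this
      rw [this, Nat.gcd_one_left, one_mul, Nat.gcd_eq_right hm₂]
    have h2 : Nat.gcd a (m₁ * m₂) ∣ Nat.gcd n₂ (m₁ * m₂) :=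
      Nat.dvd_gcd ((Nat.gcd_dvd_left _ _).trans ha) (Nat.gcd_dvd_right _ _)
    rw [key] at h2
    exact Nat.dvd_gcd (Nat.gcd_dvd_left _ _) h2
  · exact Nat.dvd_gcd (Nat.gcd_dvd_left _ _)
      ((Nat.gcd_dvd_right _ _).trans (dvd_mul_left m₂ m₁))

lemma crest_lcm_mixed (n₁ n₂ d a m₁ m₂ : ℕ) (hn₁ : 0 < n₁) (hn₂ : 0 < n₂) (hdn : d ∣ n₂)
    (hcop : Nat.Coprime n₁ (n₂ / d)) (ha : a ∣ n₂) (hm₁ : m₁ ∣ n₁)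
    (hm₂ : m₂ ∣ n₂) (hdm : d ∣ m₂) :
    Nat.lcm a (m₁ * m₂) = m₁ * Nat.lcm a m₂ := by
  have ha0 : 0 < a := Nat.pos_of_dvd_of_pos ha hn₂
  have hG : 0 < Nat.gcd a m₂ := Nat.gcd_pos_of_pos_left _ ha0
  apply Nat.eq_of_mul_eq_mul_left hG
  have h1 : Nat.gcd a m₂ * Nat.lcm a (m₁ * m₂) = a * (m₁ * m₂) := by
    rw [← crest_gcd_mixed n₁ n₂ d a m₁ m₂ hn₂ hdn hcop ha hm₁ hm₂ hdm, Nat.gcd_mul_lcm]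
  rw [h1]
  calc a * (m₁ * m₂) = m₁ * (a * m₂) := by ring
    _ = m₁ * (Nat.gcd a m₂ * Nat.lcm a m₂) := by rw [Nat.gcd_mul_lcm]
    _ = Nat.gcd a m₂ * (m₁ * Nat.lcm a m₂) := by ring

/-- the crested product `L₁ ⊗_d L₂` of two divisor sublattices is a
sublattice of the divisor lattice of `n₁·n₂` containing `1` and `n₁·n₂`. -/
theorem stmt_18 (n₁ n₂ : ℕ) (h₁ : 1 ≤ n₁) (h₂ : 1 ≤ n₂) (L₁ L₂ : Set ℕ)
    (hL₁ : ∀ x ∈ L₁, x ∣ n₁) (h1L₁ : 1 ∈ L₁) (hnL₁ : n₁ ∈ L₁)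
    (hg₁ : ∀ x ∈ L₁, ∀ y ∈ L₁, Nat.gcd x y ∈ L₁)
    (hl₁ : ∀ x ∈ L₁, ∀ y ∈ L₁, Nat.lcm x y ∈ L₁)
    (hL₂ : ∀ x ∈ L₂, x ∣ n₂) (h1L₂ : 1 ∈ L₂) (hnL₂ : n₂ ∈ L₂)
    (hg₂ : ∀ x ∈ L₂, ∀ y ∈ L₂, Nat.gcd x y ∈ L₂)
    (hl₂ : ∀ x ∈ L₂, ∀ y ∈ L₂, Nat.lcm x y ∈ L₂)
    (d : ℕ) (hd : d ∈ L₂) (hcop : Nat.Coprime n₁ (n₂ / d)) :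
    (∀ x ∈ {m | ∃ l₁ l₂, m = l₁ * l₂ ∧
        ((l₁ = 1 ∧ l₂ ∈ L₂) ∨ (l₁ ∈ L₁ ∧ l₂ ∈ L₂ ∧ d ∣ l₂))}, x ∣ n₁ * n₂) ∧
    1 ∈ {m | ∃ l₁ l₂, m = l₁ * l₂ ∧
        ((l₁ = 1 ∧ l₂ ∈ L₂) ∨ (l₁ ∈ L₁ ∧ l₂ ∈ L₂ ∧ d ∣ l₂))} ∧
    n₁ * n₂ ∈ {m | ∃ l₁ l₂, m = l₁ * l₂ ∧
        ((l₁ = 1 ∧ l₂ ∈ L₂) ∨ (l₁ ∈ L₁ ∧ l₂ ∈ L₂ ∧ d ∣ l₂))} ∧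
    (∀ x ∈ {m | ∃ l₁ l₂, m = l₁ * l₂ ∧
        ((l₁ = 1 ∧ l₂ ∈ L₂) ∨ (l₁ ∈ L₁ ∧ l₂ ∈ L₂ ∧ d ∣ l₂))},
      ∀ y ∈ {m | ∃ l₁ l₂, m = l₁ * l₂ ∧
        ((l₁ = 1 ∧ l₂ ∈ L₂) ∨ (l₁ ∈ L₁ ∧ l₂ ∈ L₂ ∧ d ∣ l₂))},
      Nat.gcd x y ∈ {m | ∃ l₁ l₂, m = l₁ * l₂ ∧
        ((l₁ = 1 ∧ l₂ ∈ L₂) ∨ (l₁ ∈ L₁ ∧ l₂ ∈ L₂ ∧ d ∣ l₂))} ∧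
      Nat.lcm x y ∈ {m | ∃ l₁ l₂, m = l₁ * l₂ ∧
        ((l₁ = 1 ∧ l₂ ∈ L₂) ∨ (l₁ ∈ L₁ ∧ l₂ ∈ L₂ ∧ d ∣ l₂))}) := by
  have hn₁ : 0 < n₁ := h₁
  have hn₂ : 0 < n₂ := h₂
  have hdn : d ∣ n₂ := hL₂ d hd
  refine ⟨?_, ?_, ?_, ?_⟩
  · rintro x ⟨a, b, rfl, ⟨rfl, hb⟩ | ⟨ha, hb, -⟩⟩
    · rw [one_mul]
      exact (hL₂ _ hb).trans (dvd_mul_left n₂ n₁)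
    · exact mul_dvd_mul (hL₁ _ ha) (hL₂ _ hb)
  · exact ⟨1, 1, (one_mul 1).symm, Or.inl ⟨rfl, h1L₂⟩⟩
  · exact ⟨n₁, n₂, rfl, Or.inr ⟨hnL₁, hnL₂, hdn⟩⟩
  · rintro x ⟨a, b, rfl, hx⟩ y ⟨c, e, rfl, hy⟩
    rcases hx with ⟨rfl, hb⟩ | ⟨ha, hb, hdb⟩ <;>
      rcases hy with ⟨rfl, he⟩ | ⟨hc, he, hde⟩
    · -- first/first
      rw [one_mul, one_mul]
      exact ⟨⟨1, Nat.gcd b e, (one_mul _).symm, Or.inl ⟨rfl, hg₂ _ hb _ he⟩⟩,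
             ⟨1, Nat.lcm b e, (one_mul _).symm, Or.inl ⟨rfl, hl₂ _ hb _ he⟩⟩⟩
    · -- first/second
      rw [one_mul]
      constructor
      · rw [crest_gcd_mixed n₁ n₂ d b c e hn₂ hdn hcop (hL₂ _ hb) (hL₁ _ hc) (hL₂ _ he) hde]
        exact ⟨1, Nat.gcd b e, (one_mul _).symm, Or.inl ⟨rfl, hg₂ _ hb _ he⟩⟩
      · rw [crest_lcm_mixed n₁ n₂ d b c e hn₁ hn₂ hdn hcop (hL₂ _ hb) (hL₁ _ hc)
          (hL₂ _ he) hde]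
        exact ⟨c, Nat.lcm b e, rfl,
          Or.inr ⟨hc, hl₂ _ hb _ he, hde.trans (Nat.dvd_lcm_right _ _)⟩⟩
    · -- second/first
      rw [one_mul]
      constructor
      · rw [Nat.gcd_comm,
          crest_gcd_mixed n₁ n₂ d e a b hn₂ hdn hcop (hL₂ _ he) (hL₁ _ ha) (hL₂ _ hb) hdb]
        exact ⟨1, Nat.gcd e b, (one_mul _).symm, Or.inl ⟨rfl, hg₂ _ he _ hb⟩⟩
      · rw [Nat.lcm_comm,
          crest_lcm_mixed n₁ n₂ d e a b hn₁ hn₂ hdn hcop (hL₂ _ he) (hL₁ _ ha)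
            (hL₂ _ hb) hdb]
        exact ⟨a, Nat.lcm e b, rfl,
          Or.inr ⟨ha, hl₂ _ he _ hb, hdb.trans (Nat.dvd_lcm_right _ _)⟩⟩
    · -- second/second
      constructor
      · rw [crest_gcd n₁ n₂ d a b c e hn₂ hdn hcop (hL₁ _ ha) (hL₁ _ hc) (hL₂ _ hb)
          (hL₂ _ he) hdb hde]
        exact ⟨Nat.gcd a c, Nat.gcd b e, rfl,
          Or.inr ⟨hg₁ _ ha _ hc, hg₂ _ hb _ he, Nat.dvd_gcd hdb hde⟩⟩
      · rw [crest_lcm n₁ n₂ d a b c e hn₁ hn₂ hdn hcop (hL₁ _ ha) (hL₁ _ hc) (hL₂ _ hb)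
          (hL₂ _ he) hdb hde]
        exact ⟨Nat.lcm a c, Nat.lcm b e, rfl,
          Or.inr ⟨hl₁ _ ha _ hc, hl₂ _ hb _ he, hdb.trans (Nat.dvd_lcm_left _ _)⟩⟩
end
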